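/- arXiv:2209.04515 — 5 statements merged into one kernel-verified Lean document; each statement's English description precedes it below -/
import Mathlib

section
/- For a real number p, the power sequence (k^p)_{k∈ℕ} belongs to X if and only if p < 1; moreover, for every p < 1, the X-norm of (k^p)_{k∈ℕ} equals 1. -/
open Filter Topology

/-- Membership in `X` (0-based indexing: `x k` is the paper's `x_{k+1}`). -/
def MemX (x : ℕ → ℝ) : Prop :=
  Summable (fun k : ℕ => |x (k + 1) / ((k : ℝ) + 2) - x k / ((k : ℝ) + 1)|) ∧
  Tendsto (fun k : ℕ => x k / ((k : ℝ) + 1)) atTop (𝓝 0)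

/-- The norm of `X`. -/
noncomputable def normX (x : ℕ → ℝ) : ℝ :=
  ∑' k : ℕ, |x (k + 1) / ((k : ℝ) + 2) - x k / ((k : ℝ) + 1)|

/-!
With `y k = x k / (k + 1)`, the `X`-norm of `x` is the total variation `∑ |y (k+1) - y k|`
of `y`. For `x k = (k+1)^p` we get `y k = (k+1)^(p-1)`. If `p < 1`, `y` decreases to `0`, so the
variation telescopes to `y 0 - 0 = 1`. If `p ≥ 1`, then `y k ≥ 1` does not tend to `0`.
-/

noncomputable def quotX (x : ℕ → ℝ) (k : ℕ) : ℝ := x k / ((k : ℝ) + 1)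

lemma quotX_succ (x : ℕ → ℝ) (k : ℕ) : quotX x (k + 1) = x (k + 1) / ((k : ℝ) + 2) := by
  rw [quotX]; push_cast; ring_nf

lemma memX_iff_quotX (x : ℕ → ℝ) :
    MemX x ↔ Summable (fun k => |quotX x (k + 1) - quotX x k|) ∧
      Tendsto (quotX x) atTop (𝓝 0) := by
  simp only [MemX, quotX_succ]; rfl

lemma normX_eq_tsum_quotX (x : ℕ → ℝ) : normX x = ∑' k, |quotX x (k + 1) - quotX x k| := by
  simp only [normX, quotX_succ]; rfl

lemma Antitone.hasSum_abs_sub_succ {f : ℕ → ℝ} {l : ℝ} (hf : Antitone f)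
    (hl : Tendsto f atTop (𝓝 l)) : HasSum (fun k => |f (k + 1) - f k|) (f 0 - l) := by
  have habs : ∀ k, |f (k + 1) - f k| = f k - f (k + 1) := fun k => by
    rw [abs_sub_comm, abs_of_nonneg (sub_nonneg.2 (hf k.le_succ))]
  simp_rw [habs]
  refine (hasSum_iff_tendsto_nat_of_nonneg (fun k => sub_nonneg.2 (hf k.le_succ)) _).2 ?_
  simp_rw [Finset.sum_range_sub']
  exact tendsto_const_nhds.sub hl

lemma quotX_rpow (p : ℝ) :
    quotX (fun k : ℕ => ((k : ℝ) + 1) ^ p) = fun k : ℕ => ((k : ℝ) + 1) ^ (p - 1) := by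
  funext k
  rw [quotX, Real.rpow_sub (by positivity), Real.rpow_one]

lemma antitone_rpow_of_le_zero {q : ℝ} (hq : q ≤ 0) :
    Antitone (fun k : ℕ => ((k : ℝ) + 1) ^ q) := fun _ _ hmn =>
  Real.rpow_le_rpow_of_nonpos (by positivity) (by gcongr) hq

lemma tendsto_rpow_of_neg {q : ℝ} (hq : q < 0) :
    Tendsto (fun k : ℕ => ((k : ℝ) + 1) ^ q) atTop (𝓝 0) := by
  have h := (tendsto_rpow_neg_atTop (neg_pos.2 hq)).comp
    (tendsto_atTop_add_const_right _ 1 tendsto_natCast_atTop_atTop)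
  simpa only [neg_neg, Function.comp_def] using h

lemma hasSum_abs_sub_quotX_rpow {p : ℝ} (hp : p < 1) :
    HasSum (fun k => |quotX (fun k : ℕ => ((k : ℝ) + 1) ^ p) (k + 1) -
      quotX (fun k : ℕ => ((k : ℝ) + 1) ^ p) k|) 1 := by
  rw [quotX_rpow]
  simpa using (antitone_rpow_of_le_zero (by linarith : p - 1 ≤ 0)).hasSum_abs_sub_succ
    (tendsto_rpow_of_neg (by linarith : p - 1 < 0))

lemma not_tendsto_rpow_of_nonneg {q : ℝ} (hq : 0 ≤ q) :
    ¬ Tendsto (fun k : ℕ => ((k : ℝ) + 1) ^ q) atTop (𝓝 0) := fun h => by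
  have h1 : ∀ k : ℕ, (1 : ℝ) ≤ ((k : ℝ) + 1) ^ q := fun k =>
    Real.one_le_rpow (by linarith [k.cast_nonneg (α := ℝ)]) hq
  linarith [ge_of_tendsto' h h1]

/-- For `p : ℝ`, the power sequence `(k^p)_{k≥1}` belongs to `X` iff `p < 1`;
moreover, for `p < 1` its `X`-norm equals `1`. -/
theorem stmt_1 (p : ℝ) :
    (MemX (fun k : ℕ => ((k : ℝ) + 1) ^ p) ↔ p < 1) ∧
    (p < 1 → normX (fun k : ℕ => ((k : ℝ) + 1) ^ p) = 1) := by
  refine ⟨⟨fun hx => ?_, fun hp => ?_⟩, fun hp => ?_⟩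
  · by_contra! hp
    have htend := ((memX_iff_quotX _).1 hx).2
    rw [quotX_rpow] at htend
    exact not_tendsto_rpow_of_nonneg (by linarith) htend
  · refine (memX_iff_quotX _).2 ⟨(hasSum_abs_sub_quotX_rpow hp).summable, ?_⟩
    rw [quotX_rpow]
    exact tendsto_rpow_of_neg (by linarith)
  · rw [normX_eq_tsum_quotX, (hasSum_abs_sub_quotX_rpow hp).tsum_eq]
end

section
/- Every y ∈ bv₀ lies in X and satisfies ‖y‖ ≤ ‖y‖₀, where ‖y‖ = ∑_{k=1}^∞ |y_{k+1}/(k+1) - y_k/k|; moreover the inclusion bv₀ ⊂ X is proper, witnessed by the constant sequence (1,1,1,...). -/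
/-!
Put `x k = y k / (k + 1)`. Splitting `x (k+1) - x k = (y (k+1) - y k)/(k+2) - y k/((k+1)(k+2))`
and bounding `|y k| ≤ |y (k+1) - y k| + |y (k+1)|` gives, one step at a time, the invariant
`∑_{k<N} |x (k+1) - x k| + |x N| ≤ ∑_{k<N} |y (k+1) - y k| + |y N|`, valid for every sequence.
If `y → 0` the last term disappears in the limit, which gives `‖y‖ ≤ ‖y‖₀`; for `y = 1` the
right-hand side is `1`, so the constant sequence lies in `X` although it is not null.
-/

open Filter Topology

/-- Membership in `bv₀`: null sequences of bounded variation. -/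
def MemBV0 (y : ℕ → ℝ) : Prop :=
  Tendsto y atTop (𝓝 0) ∧ Summable (fun k : ℕ => |y (k + 1) - y k|)

/-- The norm of `bv₀`. -/
noncomputable def norm0 (y : ℕ → ℝ) : ℝ := ∑' k : ℕ, |y (k + 1) - y k|

open Finset

lemma abs_div_add_one_sub_div_add_le {p : ℝ} (hp : 0 < p) (a b : ℝ) :
    |b / (p + 1) - a / p| + |b / (p + 1)| + |a| ≤ |b - a| + |b| + |a / p| := by
  have hp1 : 0 < p + 1 := by linarith
  have hsplit : b / (p + 1) - a / p = (b - a) / (p + 1) - a / (p * (p + 1)) := by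
    field_simp
    ring
  have hdiff : |b / (p + 1) - a / p| ≤ |b - a| / (p + 1) + |a| / (p * (p + 1)) := by
    rw [hsplit]
    refine (abs_sub _ _).trans_eq ?_
    rw [abs_div, abs_div, abs_of_pos hp1, abs_of_pos (mul_pos hp hp1)]
  have ha : |a| ≤ |b - a| + |b| := by
    have := abs_sub b (b - a)
    rwa [sub_sub_cancel, add_comm] at this
  have hgap : |b - a| + |b| + |a| / p - (|b - a| / (p + 1) + |a| / (p * (p + 1)) + |b| / (p + 1) + |a|)
      = p / (p + 1) * (|b - a| + |b| - |a|) := by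
    field_simp
    ring
  rw [abs_div b, abs_div a, abs_of_pos hp, abs_of_pos hp1]
  linarith [mul_nonneg (div_pos hp hp1).le (sub_nonneg.2 ha)]

lemma sum_range_abs_sub_div_add_abs_le (y : ℕ → ℝ) (N : ℕ) :
    ∑ k ∈ range N, |y (k + 1) / ((k : ℝ) + 2) - y k / ((k : ℝ) + 1)| + |y N / ((N : ℝ) + 1)|
      ≤ ∑ k ∈ range N, |y (k + 1) - y k| + |y N| := by
  induction N with
  | zero => simp
  | succ N ih =>
    have hstep := abs_div_add_one_sub_div_add_le N.cast_add_one_pos (y N) (y (N + 1))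
    have htwo : (N : ℝ) + 1 + 1 = N + 2 := by ring
    rw [htwo] at hstep
    rw [sum_range_succ, sum_range_succ, Nat.cast_succ, htwo]
    linarith

lemma sum_range_le_of_le_add_of_tendsto_zero {f e : ℕ → ℝ} {c : ℝ} (hf : ∀ n, 0 ≤ f n)
    (he : Tendsto e atTop (𝓝 0)) (h : ∀ n, ∑ i ∈ range n, f i ≤ c + e n) (n : ℕ) :
    ∑ i ∈ range n, f i ≤ c := by
  have hce : Tendsto (fun m => c + e m) atTop (𝓝 c) := by
    simpa using tendsto_const_nhds.add he
  refine ge_of_tendsto hce ?_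
  filter_upwards [eventually_ge_atTop n] with m hm
  exact (sum_le_sum_of_subset_of_nonneg (range_subset_range.2 hm) fun i _ _ => hf i).trans (h m)

/-- Every `y ∈ bv₀` lies in `X` with `‖y‖ ≤ ‖y‖₀`; the inclusion is proper,
witnessed by the constant sequence `(1,1,1,…)`. -/
theorem stmt_6 :
    (∀ y : ℕ → ℝ, MemBV0 y → MemX y ∧ normX y ≤ norm0 y) ∧
    MemX (fun _ => 1) ∧ ¬ MemBV0 (fun _ => 1) := by
  refine ⟨?_, ?_, ?_⟩
  · rintro y ⟨hy, hvar⟩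
    have hpartial (N : ℕ) :
        ∑ k ∈ range N, |y (k + 1) / ((k : ℝ) + 2) - y k / ((k : ℝ) + 1)| ≤ norm0 y + |y N| := by
      have hvarN := hvar.sum_le_tsum (range N) fun k _ => abs_nonneg (y (k + 1) - y k)
      rw [norm0]
      linarith [sum_range_abs_sub_div_add_abs_le y N, abs_nonneg (y N / ((N : ℝ) + 1))]
    have hbound := sum_range_le_of_le_add_of_tendsto_zero (fun _ => abs_nonneg _)
      (by simpa using hy.abs) hpartial
    refine ⟨⟨summable_of_sum_range_le (fun _ => abs_nonneg _) hbound, ?_⟩,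
      Real.tsum_le_of_sum_range_le (fun _ => abs_nonneg _) hbound⟩
    exact hy.div_atTop (tendsto_atTop_add_const_right _ 1 tendsto_natCast_atTop_atTop)
  · have hbound (N : ℕ) :
        ∑ k ∈ range N, |1 / ((k : ℝ) + 2) - 1 / ((k : ℝ) + 1)| ≤ 1 := by
      have := sum_range_abs_sub_div_add_abs_le (fun _ => 1) N
      simp only [sub_self, abs_zero, sum_const_zero, zero_add, abs_one] at this
      linarith [abs_nonneg (1 / ((N : ℝ) + 1))]
    refine ⟨summable_of_sum_range_le (fun _ => abs_nonneg _) hbound, ?_⟩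
    simpa only [one_div] using tendsto_one_div_add_atTop_nhds_zero_nat (𝕜 := ℝ)
  · rintro ⟨hconst, -⟩
    exact one_ne_zero (tendsto_nhds_unique tendsto_const_nhds hconst)
end

section
/- The sequence ((-1)^k / ln(k+1))_{k∈ℕ} tends to 0 (in fact lies in c₀) but does not belong to X, since ∑_{k=1}^∞ |x_{k+1}/(k+1) - x_k/k| diverges for x_k = (-1)^k/ln(k+1). Consequently c₀ is not contained in X. -/
open Filter Topology

theorem not_summable_of_sub_le_of_tendsto_atTop {f g : ℕ → ℝ} (hf : ∀ n, 0 ≤ f n)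
    (hfg : ∀ n, g (n + 1) - g n ≤ f n) (hg : Tendsto g atTop atTop) : ¬ Summable f := by
  have hsum : ∀ n, g n - g 0 ≤ ∑ i ∈ Finset.range n, f i := fun n => by
    rw [← Finset.sum_range_sub]
    exact Finset.sum_le_sum fun i _ => hfg i
  exact (not_summable_iff_tendsto_nat_atTop_of_nonneg hf).2
    (tendsto_atTop_mono hsum (tendsto_atTop_add_const_right _ _ hg))

theorem Real.log_sub_log_le_div {x y : ℝ} (hx : 0 < x) (hy : 0 < y) :
    Real.log y - Real.log x ≤ (y - x) / x := by
  rw [← Real.log_div hy.ne' hx.ne']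
  exact (Real.log_le_sub_one_of_pos (div_pos hy hx)).trans_eq (by field_simp)

theorem Real.log_natCast_add_two_pos (n : ℕ) : 0 < Real.log ((n : ℝ) + 2) :=
  Real.log_pos (by linarith [n.cast_nonneg (α := ℝ)])

theorem Real.tendsto_log_natCast_add_two_atTop :
    Tendsto (fun n : ℕ => Real.log ((n : ℝ) + 2)) atTop atTop :=
  Real.tendsto_log_atTop.comp (tendsto_atTop_add_const_right _ 2 tendsto_natCast_atTop_atTop)

theorem Real.not_summable_inv_natCast_add_two_mul_log :
    ¬ Summable fun n : ℕ => (((n : ℝ) + 2) * Real.log ((n : ℝ) + 2))⁻¹ := by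
  refine not_summable_of_sub_le_of_tendsto_atTop (g := fun n => Real.log (Real.log ((n : ℝ) + 2)))
    (fun n => by have := Real.log_natCast_add_two_pos n; positivity) (fun n => ?_) ?_
  · have hL := Real.log_natCast_add_two_pos n
    have hn : (0 : ℝ) < n + 2 := by positivity
    have hL' := Real.log_natCast_add_two_pos (n + 1)
    push_cast at hL' ⊢
    calc Real.log (Real.log (n + 1 + 2)) - Real.log (Real.log (n + 2))
        ≤ (Real.log (n + 1 + 2) - Real.log (n + 2)) / Real.log (n + 2) :=
          Real.log_sub_log_le_div hL hL'
      _ ≤ ((n + 1 + 2 - (n + 2)) / (n + 2)) / Real.log (n + 2) := by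
          gcongr
          exact Real.log_sub_log_le_div hn (by positivity)
      _ = ((n + 2) * Real.log (n + 2))⁻¹ := by field_simp; ring
  · exact Real.tendsto_log_atTop.comp Real.tendsto_log_natCast_add_two_atTop

theorem le_abs_neg_one_pow_mul_sub {a b : ℝ} (ha : 0 ≤ a) (hb : 0 ≤ b) (n : ℕ) :
    b ≤ |(-1) ^ (n + 1) * a - (-1) ^ n * b| := by
  have : (-1 : ℝ) ^ (n + 1) * a - (-1) ^ n * b = -((-1) ^ n * (a + b)) := by ring
  rw [this, abs_neg, abs_mul, abs_neg_one_pow, one_mul, abs_of_nonneg (by positivity)]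
  linarith

theorem not_summable_abs_sub_of_alternating {a : ℕ → ℝ} (ha : ∀ k, 0 ≤ a k)
    (h : ¬ Summable fun k : ℕ => a k / ((k : ℝ) + 1)) :
    ¬ Summable fun k : ℕ =>
      |(-1) ^ (k + 2) * a (k + 1) / ((k : ℝ) + 2) - (-1) ^ (k + 1) * a k / ((k : ℝ) + 1)| := by
  refine fun hs => h (hs.of_nonneg_of_le (fun k => by have := ha k; positivity) fun k => ?_)
  simp only [mul_div_assoc]
  exact le_abs_neg_one_pow_mul_sub (by have := ha (k + 1); positivity) (by have := ha k; positivity) _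

/-- The sequence `((-1)^k / ln(k+1))_{k≥1}` (0-based: entry `k` is
`(-1)^{k+1}/ln(k+2)`) tends to `0`, yet the series
`∑ |x_{k+1}/(k+1) - x_k/k|` diverges, so it does not belong to `X`:
`c₀` is not contained in `X`. -/
theorem stmt_8 :
    Tendsto (fun k : ℕ => (-1 : ℝ) ^ (k + 1) / Real.log ((k : ℝ) + 2))
      atTop (𝓝 0) ∧
    ¬ Summable (fun k : ℕ =>
      |((-1 : ℝ) ^ (k + 2) / Real.log ((k : ℝ) + 3)) / ((k : ℝ) + 2) -
        ((-1 : ℝ) ^ (k + 1) / Real.log ((k : ℝ) + 2)) / ((k : ℝ) + 1)|) ∧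
    ¬ MemX (fun k : ℕ => (-1 : ℝ) ^ (k + 1) / Real.log ((k : ℝ) + 2)) := by
  have htend : Tendsto (fun k : ℕ => (-1 : ℝ) ^ (k + 1) / Real.log ((k : ℝ) + 2)) atTop (𝓝 0) := by
    refine squeeze_zero_norm (fun k => ?_) Real.tendsto_log_natCast_add_two_atTop.inv_tendsto_atTop
    rw [norm_div, norm_pow, norm_neg, norm_one, one_pow, Real.norm_of_nonneg
      (Real.log_natCast_add_two_pos k).le, one_div, Pi.inv_apply]
  have hdiv : ¬ Summable fun k : ℕ => (Real.log ((k : ℝ) + 2))⁻¹ / ((k : ℝ) + 1) := by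
    refine fun hs => Real.not_summable_inv_natCast_add_two_mul_log (hs.of_nonneg_of_le
      (fun k => by have := Real.log_natCast_add_two_pos k; positivity) fun k => ?_)
    have := Real.log_natCast_add_two_pos k
    rw [div_eq_mul_inv, ← mul_inv, mul_comm]
    gcongr
    linarith
  have hnsum : ¬ Summable (fun k : ℕ =>
      |((-1 : ℝ) ^ (k + 2) / Real.log ((k : ℝ) + 3)) / ((k : ℝ) + 2) -
        ((-1 : ℝ) ^ (k + 1) / Real.log ((k : ℝ) + 2)) / ((k : ℝ) + 1)|) := by
    convert not_summable_abs_sub_of_alternating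
      (fun k => inv_nonneg.2 (Real.log_natCast_add_two_pos k).le) hdiv using 4 with k
    push_cast
    ring_nf
  refine ⟨htend, hnsum, fun hX => hnsum ?_⟩
  convert hX.1 using 7 with k
  push_cast
  ring
end

section
/- The sequence (√k)_{k∈ℕ} belongs to X but is unbounded; hence X is not contained in l_∞. -/
open Filter Topology

private lemma sqrt_div_eq' (a : ℝ) (ha : 0 < a) : Real.sqrt a / a = (Real.sqrt a)⁻¹ := by
  rw [show Real.sqrt a / a = Real.sqrt a / Real.sqrt a / Real.sqrt a by
    rw [div_div, Real.mul_self_sqrt ha.le]]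
  rw [div_self (by positivity), one_div]

private lemma inv_sqrt_anti {a b : ℝ} (ha : 0 < a) (hab : a ≤ b) :
    (Real.sqrt b)⁻¹ ≤ (Real.sqrt a)⁻¹ := by
  apply inv_anti₀ (by positivity)
  exact Real.sqrt_le_sqrt hab

private lemma sqrt_tendsto : Tendsto (fun k : ℕ => Real.sqrt ((k:ℝ) + 1)) atTop atTop := by
  rw [tendsto_atTop_atTop]
  intro b
  refine ⟨⌈b^2⌉₊, fun k hk => ?_⟩
  rcases le_or_gt b 0 with hb | hb
  · exact hb.trans (Real.sqrt_nonneg _)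
  · apply Real.le_sqrt_of_sq_le
    have : (⌈b^2⌉₊ : ℝ) ≤ k := Nat.cast_le.mpr hk
    have h2 : b^2 ≤ (⌈b^2⌉₊ : ℝ) := Nat.le_ceil _
    linarith

/-- The sequence `(√k)_{k≥1}` belongs to `X` but is unbounded; hence `X` is
not contained in `l_∞`. -/
theorem stmt_9 :
    MemX (fun k : ℕ => Real.sqrt ((k : ℝ) + 1)) ∧
    ¬ ∃ M : ℝ, ∀ k : ℕ, |Real.sqrt ((k : ℝ) + 1)| ≤ M := by
  set g : ℕ → ℝ := fun k => (Real.sqrt ((k:ℝ) + 1))⁻¹ with hg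
  have hc : ∀ k : ℕ, ((k + 1 : ℕ) : ℝ) + 1 = (k:ℝ) + 2 := by intro k; push_cast; ring
  have hterm : ∀ k : ℕ,
      |(fun k : ℕ => Real.sqrt ((k : ℝ) + 1)) (k + 1) / ((k : ℝ) + 2)
        - (fun k : ℕ => Real.sqrt ((k : ℝ) + 1)) k / ((k : ℝ) + 1)|
      = g k - g (k+1) := by
    intro k
    simp only
    rw [hc k, sqrt_div_eq' _ (by positivity), sqrt_div_eq' _ (by positivity)]
    have hanti : (Real.sqrt ((k:ℝ)+2))⁻¹ ≤ (Real.sqrt ((k:ℝ)+1))⁻¹ :=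
      inv_sqrt_anti (by positivity) (by linarith)
    rw [abs_of_nonpos (by linarith)]
    simp only [hg, hc k]
    ring
  constructor
  · constructor
    · apply summable_of_sum_range_le (c := g 0)
      · intro n; rw [hterm n]
        have := inv_sqrt_anti (a := (n:ℝ)+1) (b := (n:ℝ)+2) (by positivity) (by linarith)
        simp only [hg, hc n]
        linarith
      · intro n
        rw [Finset.sum_congr rfl (fun i _ => hterm i), Finset.sum_range_sub']
        have : (0:ℝ) ≤ g n := by simp only [hg]; positivity
        linarith
    · have heq : (fun k : ℕ => Real.sqrt ((k:ℝ)+1) / ((k:ℝ)+1)) = g := by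
        funext k; exact sqrt_div_eq' _ (by positivity)
      show Tendsto (fun k : ℕ => Real.sqrt ((k:ℝ)+1) / ((k:ℝ)+1)) atTop (𝓝 0)
      rw [heq]
      exact sqrt_tendsto.inv_tendsto_atTop
  · rintro ⟨M, hM⟩
    obtain ⟨k, hk⟩ := (sqrt_tendsto.eventually_gt_atTop M).exists
    have := hM k
    rw [abs_of_nonneg (Real.sqrt_nonneg _)] at this
    exact absurd this (not_le.mpr hk)
end

section
/- The backward shift A: X → X, (x_k)_{k∈ℕ} ↦ (x_{k+1})_{k∈ℕ}, is a well-defined bounded linear operator on X, and for every n ∈ ℕ its n-th power has operator norm exactly ‖Aⁿ‖ = n + 1. In particular ‖A‖ = 2. -/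
open Filter Topology

/-!
In 0-based indexing put `y k = x k / (k + 1)`. Then `‖x‖ = ∑ |y (k+1) - y k|` and, as `y → 0`,
`|y k| ≤ ∑_{j ≥ k} |y (j+1) - y j|`. The quotients of the shifted sequence are
`z k = (1 + n/(k+1)) y (k+n)`, and
`z (k+1) - z k = (1 + n/(k+2)) (y (k+n+1) - y (k+n)) - n/((k+1)(k+2)) y (k+n)`.
Bounding `|y (k+n)|` by its tail and exchanging the order of summation, the term
`|y (m+n+1) - y (m+n)|` receives the total weight `1 + n/(m+2) + ∑_{k ≤ m} n/((k+1)(k+2)) = n + 1`.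
The bound is attained at `x = (1, 2, …, n+1, 0, 0, …)`, of norm `1`, whose `n`-fold shift
`(n+1, 0, 0, …)` has norm `n + 1`.
-/

open Finset ENNReal

theorem ENNReal.tsum_mul_tsum_nat_add_eq_tsum_sum_range (a c : ℕ → ℝ≥0∞) :
    ∑' k, a k * ∑' j, c (j + k) = ∑' m, (∑ k ∈ range (m + 1), a k) * c m := by
  calc ∑' k, a k * ∑' j, c (j + k)
      = ∑' p : ℕ × ℕ, a p.1 * c (p.2 + p.1) := by
        simp only [← ENNReal.tsum_mul_left, ENNReal.tsum_prod']
    _ = ∑' s : Σ m, antidiagonal m, a s.2.1.1 * c (s.2.1.2 + s.2.1.1) :=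
        (HasAntidiagonal.sigmaAntidiagonalEquivProd.tsum_eq
          (fun p : ℕ × ℕ => a p.1 * c (p.2 + p.1))).symm
    _ = ∑' m, ∑ p ∈ antidiagonal m, a p.1 * c m := by
        rw [ENNReal.tsum_sigma']
        refine tsum_congr fun m => ?_
        rw [Finset.tsum_subtype (antidiagonal m) (fun p : ℕ × ℕ => a p.1 * c (p.2 + p.1))]
        exact Finset.sum_congr rfl fun p hp => by rw [add_comm, mem_antidiagonal.1 hp]
    _ = ∑' m, (∑ k ∈ range (m + 1), a k) * c m := by
        simp only [← Finset.sum_mul, Nat.sum_antidiagonal_eq_sum_range_succ_mk]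

theorem summable_and_tsum_le_of_tsum_ofReal_le {f : ℕ → ℝ} (hf : ∀ k, 0 ≤ f k) {B : ℝ}
    (hB : 0 ≤ B) (h : ∑' k, ENNReal.ofReal (f k) ≤ ENNReal.ofReal B) :
    Summable f ∧ ∑' k, f k ≤ B := by
  have hs : Summable f := by
    simpa only [ENNReal.toReal_ofReal (hf _)] using
      ENNReal.summable_toReal (ne_top_of_le_ne_top ENNReal.ofReal_ne_top h)
  refine ⟨hs, (ENNReal.ofReal_le_ofReal_iff hB).1 ?_⟩
  rwa [ENNReal.ofReal_tsum_of_nonneg hf hs]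

theorem sum_range_div_succ_mul_succ (n : ℝ) (m : ℕ) :
    ∑ k ∈ range m, n / (((k : ℝ) + 1) * ((k : ℝ) + 2)) = n * m / ((m : ℝ) + 1) := by
  induction m with
  | zero => simp
  | succ m ih =>
    rw [sum_range_succ, ih]
    push_cast
    field_simp
    ring

theorem abs_le_tsum_abs_sub_of_tendsto_zero {y : ℕ → ℝ}
    (hd : Summable fun k => |y (k + 1) - y k|) (hy : Tendsto y atTop (𝓝 0)) (k : ℕ) :
    |y k| ≤ ∑' j, |y (j + k + 1) - y (j + k)| := by
  have hsum : Summable fun j => |y (j + k + 1) - y (j + k)| := by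
    simpa only [add_right_comm] using (summable_nat_add_iff k).2 hd
  have htel : Tendsto (fun m => ∑ j ∈ range m, (y (j + k + 1) - y (j + k))) atTop
      (𝓝 (0 - y k)) := by
    simp_rw [add_right_comm _ k 1, Finset.sum_range_sub (fun j => y (j + k)), zero_add]
    exact (hy.comp (tendsto_add_atTop_nat k)).sub_const (y k)
  calc |y k| = |∑' j, (y (j + k + 1) - y (j + k))| := by
        rw [tendsto_nhds_unique hsum.of_abs.hasSum.tendsto_sum_nat htel, zero_sub, abs_neg]
    _ ≤ ∑' j, |y (j + k + 1) - y (j + k)| :=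
        norm_tsum_le_tsum_norm (f := fun j => y (j + k + 1) - y (j + k)) hsum

noncomputable def shiftQuot (n : ℕ) (y : ℕ → ℝ) (k : ℕ) : ℝ := (1 + n / ((k : ℝ) + 1)) * y (k + n)

section ShiftQuot

variable (n : ℕ) {y : ℕ → ℝ}

theorem shiftQuot_succ_sub (k : ℕ) :
    shiftQuot n y (k + 1) - shiftQuot n y k
      = (1 + n / ((k : ℝ) + 2)) * (y (k + n + 1) - y (k + n))
        - n / (((k : ℝ) + 1) * ((k : ℝ) + 2)) * y (k + n) := by
  rw [shiftQuot, shiftQuot, add_right_comm k 1 n]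
  push_cast
  field_simp
  ring

theorem ofReal_one_add_div_add_sum_range_eq (m : ℕ) :
    ENNReal.ofReal (1 + n / ((m : ℝ) + 2))
      + ∑ k ∈ range (m + 1), ENNReal.ofReal (n / (((k : ℝ) + 1) * ((k : ℝ) + 2)))
      = ENNReal.ofReal (n + 1) := by
  rw [← ENNReal.ofReal_sum_of_nonneg fun k _ => by positivity, sum_range_div_succ_mul_succ,
    ← ENNReal.ofReal_add (by positivity) (by positivity)]
  congr 1
  push_cast
  field_simp
  ring

theorem tsum_ofReal_abs_shiftQuot_succ_sub_le (hd : Summable fun k => |y (k + 1) - y k|)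
    (hy : Tendsto y atTop (𝓝 0)) :
    ∑' k, ENNReal.ofReal |shiftQuot n y (k + 1) - shiftQuot n y k|
      ≤ ENNReal.ofReal ((n + 1) * ∑' k, |y (k + 1) - y k|) := by
  set a : ℕ → ℝ≥0∞ := fun k => ENNReal.ofReal (n / (((k : ℝ) + 1) * ((k : ℝ) + 2)))
  set b : ℕ → ℝ≥0∞ := fun k => ENNReal.ofReal (1 + n / ((k : ℝ) + 2))
  set c : ℕ → ℝ≥0∞ := fun k => ENNReal.ofReal |y (k + n + 1) - y (k + n)|
  have hpoint : ∀ k, ENNReal.ofReal |shiftQuot n y (k + 1) - shiftQuot n y k|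
      ≤ b k * c k + a k * ∑' j, c (j + k) := by
    intro k
    have htail : |y (k + n)| ≤ ∑' j, |y (j + k + n + 1) - y (j + k + n)| := by
      simpa only [add_assoc] using abs_le_tsum_abs_sub_of_tendsto_zero hd hy (k + n)
    have hreal : |shiftQuot n y (k + 1) - shiftQuot n y k|
        ≤ (1 + n / ((k : ℝ) + 2)) * |y (k + n + 1) - y (k + n)|
          + n / (((k : ℝ) + 1) * ((k : ℝ) + 2)) * ∑' j, |y (j + k + n + 1) - y (j + k + n)| := by
      rw [shiftQuot_succ_sub]
      refine (abs_sub _ _).trans (add_le_add ?_ ?_) <;> rw [abs_mul, abs_of_nonneg (by positivity)]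
      exact mul_le_mul_of_nonneg_left htail (by positivity)
    have hs : Summable fun j => |y (j + k + n + 1) - y (j + k + n)| := by
      simpa only [add_right_comm _ 1, add_assoc] using (summable_nat_add_iff (k + n)).2 hd
    refine (ENNReal.ofReal_le_ofReal hreal).trans_eq ?_
    rw [ENNReal.ofReal_add (by positivity) (by positivity), ENNReal.ofReal_mul (by positivity),
      ENNReal.ofReal_mul (by positivity), ENNReal.ofReal_tsum_of_nonneg (fun _ => abs_nonneg _) hs]
  calc _ ≤ ∑' k, (b k * c k + a k * ∑' j, c (j + k)) := ENNReal.tsum_le_tsum hpoint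
    _ = ∑' m, (b m + ∑ k ∈ range (m + 1), a k) * c m := by
        rw [ENNReal.tsum_add, ENNReal.tsum_mul_tsum_nat_add_eq_tsum_sum_range, ← ENNReal.tsum_add]
        simp only [add_mul]
    _ = ENNReal.ofReal (n + 1) * ∑' m, c m := by
        simp only [b, a, ofReal_one_add_div_add_sum_range_eq, ENNReal.tsum_mul_left]
    _ ≤ ENNReal.ofReal (n + 1) * ∑' m, ENNReal.ofReal |y (m + 1) - y m| :=
        mul_le_mul_right (ENNReal.tsum_comp_le_tsum_of_injective (add_left_injective n) _) _
    _ = ENNReal.ofReal ((n + 1) * ∑' k, |y (k + 1) - y k|) := by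
        rw [ENNReal.ofReal_mul (by positivity), ENNReal.ofReal_tsum_of_nonneg
          (fun _ => abs_nonneg _) hd]

theorem tendsto_shiftQuot_zero (hy : Tendsto y atTop (𝓝 0)) :
    Tendsto (shiftQuot n y) atTop (𝓝 0) := by
  unfold shiftQuot
  have hcoeff : Tendsto (fun k : ℕ => 1 + n / ((k : ℝ) + 1)) atTop (𝓝 (1 + 0)) :=
    tendsto_const_nhds.add (by
      simpa only [mul_one_div, mul_zero] using
        tendsto_one_div_add_atTop_nhds_zero_nat.const_mul (n : ℝ))
  simpa using hcoeff.mul (hy.comp (tendsto_add_atTop_nat n))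

end ShiftQuot

noncomputable def scaled (x : ℕ → ℝ) (k : ℕ) : ℝ := x k / ((k : ℝ) + 1)

theorem scaled_succ (x : ℕ → ℝ) (k : ℕ) : scaled x (k + 1) = x (k + 1) / ((k : ℝ) + 2) := by
  rw [scaled]
  push_cast
  ring_nf

theorem memX_iff (x : ℕ → ℝ) :
    MemX x ↔ Summable (fun k => |scaled x (k + 1) - scaled x k|) ∧
      Tendsto (scaled x) atTop (𝓝 0) := by
  simp only [scaled_succ]
  rfl

theorem normX_eq (x : ℕ → ℝ) : normX x = ∑' k, |scaled x (k + 1) - scaled x k| := by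
  simp only [scaled_succ]
  rfl

theorem scaled_shift (x : ℕ → ℝ) (n : ℕ) :
    scaled (fun k => x (k + n)) = shiftQuot n (scaled x) := by
  funext k
  simp only [scaled, shiftQuot]
  push_cast
  field_simp
  ring

theorem memX_and_normX_of_scaled_eq_ite {x : ℕ → ℝ} {m : ℕ} {a : ℝ}
    (hx : ∀ k, scaled x k = if k ≤ m then a else 0) : MemX x ∧ normX x = |a| := by
  have hdiff : ∀ k, |scaled x (k + 1) - scaled x k| = if k = m then |a| else 0 := by
    intro k
    rcases lt_trichotomy k m with h | rfl | h
    · simp [hx, h.ne, Nat.succ_le_of_lt h, h.le]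
    · simp [hx]
    · simp [hx, h.ne', h.not_ge, (Nat.lt_succ_of_lt h).not_ge]
  rw [memX_iff, normX_eq]
  simp only [hdiff]
  refine ⟨⟨summable_of_ne_finset_zero (s := {m}) fun k hk => if_neg (by simpa using hk), ?_⟩,
    tsum_ite_eq m _⟩
  refine tendsto_const_nhds.congr' ?_
  filter_upwards [eventually_gt_atTop m] with k hk
  rw [hx, if_neg hk.not_ge]

/-- The backward shift `A x = (x_{k+1})` is a well-defined bounded linear
operator on `X`, and `‖Aⁿ‖ = n + 1`: the `n`-th power maps `X` to `X` with
`‖Aⁿx‖ ≤ (n+1)‖x‖`, and this bound is attained at a unit vector. -/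
theorem stmt_10 (n : ℕ) :
    (∀ x : ℕ → ℝ, MemX x →
      MemX (fun k => x (k + n)) ∧
      normX (fun k => x (k + n)) ≤ ((n : ℝ) + 1) * normX x) ∧
    (∃ x : ℕ → ℝ, MemX x ∧ normX x = 1 ∧
      normX (fun k => x (k + n)) = (n : ℝ) + 1) := by
  refine ⟨fun x hx => ?_, ?_⟩
  · obtain ⟨hd, hy⟩ := (memX_iff x).1 hx
    rw [memX_iff, normX_eq, normX_eq, scaled_shift]
    obtain ⟨hs, hle⟩ := summable_and_tsum_le_of_tsum_ofReal_le (fun _ => abs_nonneg _)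
      (by positivity) (tsum_ofReal_abs_shiftQuot_succ_sub_le n hd hy)
    exact ⟨⟨hs, tendsto_shiftQuot_zero n hy⟩, hle⟩
  · set w : ℕ → ℝ := fun k => if k ≤ n then (k : ℝ) + 1 else 0
    have hw : ∀ k, scaled w k = if k ≤ n then 1 else 0 := fun k => by
      by_cases hk : k ≤ n <;> simp [scaled, w, hk, Nat.cast_add_one_ne_zero]
    have hw_shift : ∀ k, scaled (fun k => w (k + n)) k = if k ≤ 0 then (n : ℝ) + 1 else 0 :=
      fun k => by rcases k with _ | k <;> simp [scaled, w]
    obtain ⟨hmem, hnorm⟩ := memX_and_normX_of_scaled_eq_ite hw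
    obtain ⟨-, hnorm_shift⟩ := memX_and_normX_of_scaled_eq_ite hw_shift
    exact ⟨w, hmem, by rw [hnorm, abs_one], by rw [hnorm_shift, abs_of_nonneg (by positivity)]⟩
end
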